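/- arXiv:1009.3866 — 8 statements merged into one kernel-verified Lean document; each statement's English description precedes it below -/
import Mathlib

section
/- Let G be a finite group and let H, K be proper subgroups of G such that {H^g, K : g ∈ G} is a covering of G, i.e. G is the set-theoretic union of K and of all the G-conjugates H^g of H. Then the normal closure of H in G equals G, and the normal core of H in G is contained in K. -/
/-!
A finite transitive action on at least two points has a fixed-point-free element: by Burnside's
lemma the numbers of fixed points average to one, and the identity fixes more than one point.
Applied to `G ⧸ H`, some `x` lies in no conjugate of `H`, so `x ∈ K`. If `c ∈ H_G \ K`, then
`x * c ∉ K`, so `x * c` lies in some `H^g`; that conjugate contains the core, hence `c`, hence `x`,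
which is absurd. Likewise, the normal closure `N` of `H` contains every element outside `K`, so
`G = K ∪ N`; as no group is the union of two proper subgroups, `N = G`.
-/

open MulAction

theorem MulAction.exists_forall_smul_ne {G α : Type*} [Group G] [Finite G] [MulAction G α]
    [Finite α] [Nontrivial α] [IsPretransitive G α] : ∃ g : G, ∀ a : α, g • a ≠ a := by
  classical
  cases nonempty_fintype G
  cases nonempty_fintype α
  by_contra! hfix
  have hburnside := sum_card_fixedBy_eq_card_orbits_mul_card_group G α
  have horbits : Fintype.card (orbitRel.Quotient G α) = 1 := by
    have := (pretransitive_iff_subsingleton_quotient G α).mp inferInstance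
    exact Fintype.card_eq_one_iff.mpr
      ⟨Quotient.mk'' (Classical.arbitrary α), fun _ => Subsingleton.elim _ _⟩
  have hlt : ∑ _g : G, 1 < ∑ g : G, Fintype.card (fixedBy α g) :=
    Finset.sum_lt_sum (fun g _ => let ⟨a, ha⟩ := hfix g; Fintype.card_pos_iff.mpr ⟨⟨a, ha⟩⟩)
      ⟨1, Finset.mem_univ _, by simpa using Fintype.one_lt_card⟩
  rw [hburnside, horbits, one_mul, Finset.sum_const, Finset.card_univ, smul_eq_mul,
    mul_one] at hlt
  exact lt_irrefl _ hlt

theorem Subgroup.exists_forall_conj_notMem {G : Type*} [Group G] [Finite G] {H : Subgroup G}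
    (hH : H ≠ ⊤) : ∃ x : G, ∀ g : G, g * x * g⁻¹ ∉ H := by
  have := QuotientGroup.nontrivial_iff.mpr hH
  obtain ⟨x, hx⟩ := exists_forall_smul_ne (G := G) (α := G ⧸ H)
  refine ⟨x, fun g hg => hx (g⁻¹ : G) ?_⟩
  rw [Quotient.smul_mk, QuotientGroup.eq]
  simpa [mul_assoc] using H.inv_mem hg

theorem Subgroup.eq_top_or_eq_top_of_forall_mem_or_mem {G : Type*} [Group G] {A B : Subgroup G}
    (h : ∀ x, x ∈ A ∨ x ∈ B) : A = ⊤ ∨ B = ⊤ := by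
  by_contra! hAB
  obtain ⟨a, haA⟩ := SetLike.exists_not_mem_of_ne_top A hAB.1
  obtain ⟨b, hbB⟩ := SetLike.exists_not_mem_of_ne_top B hAB.2
  have haB := (h a).resolve_left haA
  have hbA := (h b).resolve_right hbB
  rcases h (a * b) with habA | habB
  · exact haA ((A.mul_mem_cancel_right hbA).mp habA)
  · exact hbB ((B.mul_mem_cancel_left haB).mp habB)

theorem Subgroup.normalClosure_eq_top_of_forall_mem_or_conj_mem {G : Type*} [Group G]
    {H K : Subgroup G} (hK : K ≠ ⊤) (hcov : ∀ x : G, x ∈ K ∨ ∃ g : G, g * x * g⁻¹ ∈ H) :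
    normalClosure (H : Set G) = ⊤ := by
  refine ((eq_top_or_eq_top_of_forall_mem_or_mem fun x => ?_).resolve_left hK)
  refine (hcov x).imp id fun ⟨g, hg⟩ => ?_
  simpa [mul_assoc] using normalClosure_normal.conj_mem' _ (subset_normalClosure hg) g

theorem Subgroup.normalCore_le_of_forall_mem_or_conj_mem {G : Type*} [Group G] [Finite G]
    {H K : Subgroup G} (hH : H ≠ ⊤) (hcov : ∀ x : G, x ∈ K ∨ ∃ g : G, g * x * g⁻¹ ∈ H) :
    H.normalCore ≤ K := by
  intro c hc
  obtain ⟨x, hx⟩ := exists_forall_conj_notMem hH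
  have hxK : x ∈ K := (hcov x).resolve_right fun ⟨g, hg⟩ => hx g hg
  refine (K.mul_mem_cancel_left hxK).mp ((hcov (x * c)).resolve_right fun ⟨g, hg⟩ => hx g ?_)
  have hcH : g * c * g⁻¹ ∈ H := H.normalCore_le (H.normalCore_normal.conj_mem c hc g)
  rw [← H.mul_mem_cancel_right hcH]
  convert hg using 1
  group

/-- If `{H^g, K : g ∈ G}` covers the finite group `G` (with `H`, `K` proper subgroups),
then the normal closure of `H` is `G` and the normal core of `H` is contained in `K`. -/
theorem stmt_0 {G : Type*} [Group G] [Finite G] (H K : Subgroup G)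
    (hH : H ≠ ⊤) (hK : K ≠ ⊤)
    (hcov : ∀ x : G, x ∈ K ∨ ∃ g : G, g * x * g⁻¹ ∈ H) :
    Subgroup.normalClosure (H : Set G) = ⊤ ∧ H.normalCore ≤ K :=
  ⟨Subgroup.normalClosure_eq_top_of_forall_mem_or_conj_mem hK hcov,
    Subgroup.normalCore_le_of_forall_mem_or_conj_mem hH hcov⟩
end

section
/- Let G be a finite group and let H, K be proper subgroups of G such that G = K ∪ ⋃_{g∈G} H^g. If K is normal in G, then G = KH. -/
/-!
Every element of `G` is conjugate into `K ⊔ H`: elements of `K` trivially, the others because they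
are conjugate into `H`. By Jordan's lemma (a finite group is not the union of the conjugates of a
proper subgroup) `K ⊔ H = G`, and `K ⊔ H = KH` as `K` is normal.
-/

theorem Subgroup.eq_top_of_forall_exists_conj_mem {G : Type*} [Group G] [Finite G]
    (H : Subgroup G) (hconj : ∀ x : G, ∃ g : G, g * x * g⁻¹ ∈ H) : H = ⊤ := by
  -- `conjBy` is a surjection between sets of the same size `|G ⧸ H| * |H| = |G|`, hence
  -- injective; but it sends every `(c, 1)` to `1`, so there is only one coset.
  let conjBy : (G ⧸ H) × H → G := fun p => p.1.out * p.2 * p.1.out⁻¹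
  have hsurj : Function.Surjective conjBy := by
    intro x
    obtain ⟨g, hg⟩ := hconj x
    obtain ⟨⟨h₀, hh₀⟩, hout⟩ := QuotientGroup.mk_out_eq_mul H g⁻¹
    refine ⟨(QuotientGroup.mk g⁻¹, ⟨h₀⁻¹ * (g * x * g⁻¹) * h₀, ?_⟩), ?_⟩
    · exact H.mul_mem (H.mul_mem (H.inv_mem hh₀) hg) hh₀
    · simp only [conjBy, hout]
      group
  have hinj : Function.Injective conjBy :=
    (Finite.injective_iff_surjective_of_equiv H.groupEquivQuotientProdSubgroup.symm).mpr hsurj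
  refine QuotientGroup.subgroup_eq_top_of_subsingleton H ⟨fun c d => ?_⟩
  exact congrArg Prod.fst (@hinj (c, 1) (d, 1) (by simp [conjBy]))

theorem stmt_1_general {G : Type*} [Group G] [Finite G] (H K : Subgroup G)
    [K.Normal]
    (hcov : ∀ x : G, x ∈ K ∨ ∃ g : G, g * x * g⁻¹ ∈ H) :
    ∀ x : G, ∃ k ∈ K, ∃ h ∈ H, x = k * h := by
  have hsup : K ⊔ H = ⊤ := by
    refine Subgroup.eq_top_of_forall_exists_conj_mem _ fun x => ?_
    rcases hcov x with hx | ⟨g, hg⟩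
    · exact ⟨1, by simpa using Subgroup.mem_sup_left hx⟩
    · exact ⟨g, Subgroup.mem_sup_right hg⟩
  intro x
  have hx : x ∈ (↑(K ⊔ H) : Set G) := by simp [hsup]
  rw [Subgroup.normal_mul] at hx
  obtain ⟨k, hk, h, hh, rfl⟩ := hx
  exact ⟨k, hk, h, hh, rfl⟩

/-- If `G = K ∪ ⋃_{g∈G} H^g` with `H`, `K` proper subgroups of a finite group `G`
and `K` is normal in `G`, then `G = KH`. -/
theorem stmt_1 {G : Type*} [Group G] [Finite G] (H K : Subgroup G)
    (hH : H ≠ ⊤) (hK : K ≠ ⊤) [K.Normal]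
    (hcov : ∀ x : G, x ∈ K ∨ ∃ g : G, g * x * g⁻¹ ∈ H) :
    ∀ x : G, ∃ k ∈ K, ∃ h ∈ H, x = k * h :=
  stmt_1_general H K hcov
end

section
/- Let G be a finite group and let H, K be proper subgroups of G such that G = K ∪ ⋃_{g∈G} H^g. Then also G = K_G ∪ ⋃_{g∈G} H^g, where K_G is the normal core of K in G; moreover K_G is a proper subgroup of G. -/
namespace Subgroup

variable {G : Type*} [Group G]

theorem normalCore_ne_top {K : Subgroup G} (hK : K ≠ ⊤) : K.normalCore ≠ ⊤ :=
  fun h => hK (top_le_iff.mp (h ▸ K.normalCore_le))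

theorem exists_conj_mem_of_exists_conj_mem_conj (H : Subgroup G) {x b : G}
    (h : ∃ g : G, g * (b * x * b⁻¹) * g⁻¹ ∈ H) : ∃ g : G, g * x * g⁻¹ ∈ H := by
  obtain ⟨g, hg⟩ := h
  exact ⟨g * b, by simpa [mul_assoc] using hg⟩

theorem mem_normalCore_of_not_exists_conj_mem {H K : Subgroup G}
    (hcov : ∀ x : G, x ∈ K ∨ ∃ g : G, g * x * g⁻¹ ∈ H) {x : G}
    (hx : ¬∃ g : G, g * x * g⁻¹ ∈ H) : x ∈ K.normalCore := fun b =>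
  (hcov (b * x * b⁻¹)).resolve_right
    fun h => hx (H.exists_conj_mem_of_exists_conj_mem_conj h)

end Subgroup

theorem stmt_2_general {G : Type*} [Group G] (H K : Subgroup G)
    (hK : K ≠ ⊤)
    (hcov : ∀ x : G, x ∈ K ∨ ∃ g : G, g * x * g⁻¹ ∈ H) :
    (∀ x : G, x ∈ K.normalCore ∨ ∃ g : G, g * x * g⁻¹ ∈ H) ∧ K.normalCore ≠ ⊤ :=
  ⟨fun _ => or_iff_not_imp_right.mpr (Subgroup.mem_normalCore_of_not_exists_conj_mem hcov),
   Subgroup.normalCore_ne_top hK⟩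

/-- If `G = K ∪ ⋃_{g∈G} H^g` with `H`, `K` proper subgroups of a finite group `G`,
then also `G = K_G ∪ ⋃_{g∈G} H^g` where `K_G` is the normal core of `K`,
and `K_G` is a proper subgroup of `G`. -/
theorem stmt_2 {G : Type*} [Group G] [Finite G] (H K : Subgroup G)
    (hH : H ≠ ⊤) (hK : K ≠ ⊤)
    (hcov : ∀ x : G, x ∈ K ∨ ∃ g : G, g * x * g⁻¹ ∈ H) :
    (∀ x : G, x ∈ K.normalCore ∨ ∃ g : G, g * x * g⁻¹ ∈ H) ∧ K.normalCore ≠ ⊤ :=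
  stmt_2_general H K hK hcov
end

section
/- Let G be a finite group and let H, K be proper subgroups of G with G = K ∪ ⋃_{g∈G} H^g. Then (G, H, H ∩ K_G) is a Frobenius–Wielandt group, where K_G is the normal core of K in G; in particular H is self-normalizing in G (N_G(H) = H) and H ∩ H^g ≤ H ∩ K_G for every g ∈ G − H. -/
/-!
Replace `K` by its normal core `N`; the covering hypothesis survives, since a conjugate of an
element outside `N` lies outside `K`. For `y ∉ N` the set `T y = {g | g * y * g⁻¹ ∈ H}` is a
nonempty union of right cosets of `H`. Counting the pairs `(y, g)` with `y ∉ N` and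
`g * y * g⁻¹ ∈ H` gives `∑_{y ∉ N} |T y| = |G| * |H \ N| ≤ |G \ N| * |H|`, the inequality being
`|N H| ≤ |G|`. So every `T y` is a single coset, i.e. an element of `H \ N` is conjugated into `H`
only by elements of `H`; this is the Frobenius–Wielandt condition, and self-normalization follows
because `H ⊄ N`.
-/

open Finset

namespace Subgroup

variable {G : Type*} [Group G]

theorem card_mul_card_le_card_mul_card_inf [Finite G] (N H : Subgroup G) [N.Normal] :
    Nat.card N * Nat.card H ≤ Nat.card G * Nat.card (N ⊓ H : Subgroup G) := by
  have hcard : Nat.card (N ⊓ H : Subgroup G) * N.relIndex H = Nat.card H := by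
    simpa [relIndex_bot_left] using relIndex_inf_mul_relIndex ⊥ N H
  calc Nat.card N * Nat.card H
      = Nat.card N * Nat.card (N ⊓ H : Subgroup G) * N.relIndex H := by rw [mul_assoc, hcard]
    _ ≤ Nat.card N * Nat.card (N ⊓ H : Subgroup G) * N.index :=
      Nat.mul_le_mul_left _ <| Nat.le_of_dvd (Nat.pos_of_ne_zero index_ne_zero_of_finite)
        (relIndex_dvd_index_of_normal N H)
    _ = Nat.card G * Nat.card (N ⊓ H : Subgroup G) := by rw [mul_right_comm, card_mul_index]

theorem Normal.conj_mem_iff {N : Subgroup G} (hN : N.Normal) {g y : G} :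
    g * y * g⁻¹ ∈ N ↔ y ∈ N :=
  hN.mem_comm_iff.trans (by rw [inv_mul_cancel_left])

theorem mem_normalCore_or_exists_conj_mem {H K : Subgroup G}
    (hcov : ∀ x : G, x ∈ K ∨ ∃ g : G, g * x * g⁻¹ ∈ H) (x : G) :
    x ∈ K.normalCore ∨ ∃ g : G, g * x * g⁻¹ ∈ H := by
  refine or_iff_not_imp_right.mpr fun hx b => (hcov (b * x * b⁻¹)).resolve_right ?_
  rintro ⟨g, hg⟩
  exact hx ⟨g * b, by simpa [mul_assoc] using hg⟩

section Conjugators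

variable [Fintype G] (H : Subgroup G) [DecidablePred (· ∈ H)]

def conjugatorsInto (y : G) : Finset G := {g | g * y * g⁻¹ ∈ H}

variable {H}

@[simp]
theorem mem_conjugatorsInto {y g : G} : g ∈ H.conjugatorsInto y ↔ g * y * g⁻¹ ∈ H := by
  simp [conjugatorsInto]

theorem card_filter_mul_inv_mem (a : G) : #({g | g * a⁻¹ ∈ H} : Finset G) = Nat.card H := by
  rw [Nat.card_eq_fintype_card, Fintype.card_subtype]
  exact card_equiv (Equiv.mulRight a⁻¹) (by simp)

theorem filter_mul_inv_mem_subset_conjugatorsInto {y a : G} (ha : a ∈ H.conjugatorsInto y) :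
    ({g | g * a⁻¹ ∈ H} : Finset G) ⊆ H.conjugatorsInto y := by
  intro g hg
  simp only [mem_filter, mem_univ, true_and, mem_conjugatorsInto] at hg ha ⊢
  have hconj : g * y * g⁻¹ = g * a⁻¹ * (a * y * a⁻¹) * (g * a⁻¹)⁻¹ := by group
  rw [hconj]
  exact mul_mem (mul_mem hg ha) (inv_mem hg)

theorem card_le_card_conjugatorsInto {y a : G} (ha : a ∈ H.conjugatorsInto y) :
    Nat.card H ≤ #(H.conjugatorsInto y) :=
  card_filter_mul_inv_mem (H := H) a ▸ card_le_card (filter_mul_inv_mem_subset_conjugatorsInto ha)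

theorem two_mul_card_le_card_conjugatorsInto {y a b : G} (ha : a ∈ H.conjugatorsInto y)
    (hb : b ∈ H.conjugatorsInto y) (hab : a * b⁻¹ ∉ H) :
    2 * Nat.card H ≤ #(H.conjugatorsInto y) := by
  classical
  have hdisj : Disjoint ({g | g * a⁻¹ ∈ H} : Finset G) ({g | g * b⁻¹ ∈ H} : Finset G) := by
    refine disjoint_left.mpr fun g hga hgb => hab ?_
    simp only [mem_filter, mem_univ, true_and] at hga hgb
    simpa [mul_assoc] using mul_mem (inv_mem hga) hgb
  calc 2 * Nat.card H
      = #(({g | g * a⁻¹ ∈ H} : Finset G) ∪ ({g | g * b⁻¹ ∈ H} : Finset G)) := by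
        rw [card_union_of_disjoint hdisj, card_filter_mul_inv_mem, card_filter_mul_inv_mem, two_mul]
    _ ≤ #(H.conjugatorsInto y) :=
      card_le_card <| union_subset (filter_mul_inv_mem_subset_conjugatorsInto ha)
        (filter_mul_inv_mem_subset_conjugatorsInto hb)

variable (H) (N : Subgroup G) [N.Normal] [DecidablePred (· ∈ N)]

theorem sum_card_conjugatorsInto :
    ∑ y ∈ {y | y ∉ N}, #(H.conjugatorsInto y) = Fintype.card G * #{z | z ∈ H ∧ z ∉ N} := by
  have hfiber (g : G) :
      #(({y | y ∉ N} : Finset G).bipartiteBelow (fun y g ↦ g * y * g⁻¹ ∈ H) g) =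
        #{z | z ∈ H ∧ z ∉ N} :=
    card_equiv (MulAut.conj g).toEquiv fun y ↦ by
      simp [bipartiteBelow, ‹N.Normal›.conj_mem_iff, and_comm]
  change ∑ y ∈ _, #((univ : Finset G).bipartiteAbove (fun y g ↦ g * y * g⁻¹ ∈ H) y) = _
  simp_rw [sum_card_bipartiteAbove_eq_sum_card_bipartiteBelow, hfiber, sum_const, card_univ,
    smul_eq_mul]

theorem sum_card_conjugatorsInto_le :
    ∑ y ∈ {y | y ∉ N}, #(H.conjugatorsInto y) ≤ #{y | y ∉ N} * Nat.card H := by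
  have hH : #{z | z ∈ H ∧ z ∉ N} + Nat.card (N ⊓ H : Subgroup G) = Nat.card H := by
    simp only [Nat.card_eq_fintype_card, Fintype.card_subtype, mem_inf]
    rw [add_comm, ← card_filter_add_card_filter_not (s := {z | z ∈ H}) (· ∈ N)]
    simp only [filter_filter, and_comm]
  have hG : #{y | y ∉ N} + Nat.card N = Fintype.card G := by
    rw [add_comm, Nat.card_eq_fintype_card, Fintype.card_subtype, card_filter_add_card_filter_not,
      card_univ]
  have key := card_mul_card_le_card_mul_card_inf N H
  rw [Nat.card_eq_fintype_card (α := G)] at key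
  rw [sum_card_conjugatorsInto]
  nlinarith

theorem card_conjugatorsInto_eq_card (hcov : ∀ x : G, x ∈ N ∨ ∃ g : G, g * x * g⁻¹ ∈ H) {y : G}
    (hy : y ∉ N) : #(H.conjugatorsInto y) = Nat.card H := by
  have hlow : ∀ x ∈ ({x | x ∉ N} : Finset G), Nat.card H ≤ #(H.conjugatorsInto x) := by
    intro x hx
    obtain ⟨g, hg⟩ := (hcov x).resolve_left (by simpa using hx)
    exact card_le_card_conjugatorsInto (mem_conjugatorsInto.mpr hg)
  have hsum : ∑ x ∈ {x | x ∉ N}, Nat.card H = ∑ x ∈ {x | x ∉ N}, #(H.conjugatorsInto x) :=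
    le_antisymm (sum_le_sum hlow) (by simpa using sum_card_conjugatorsInto_le H N)
  exact ((sum_eq_sum_iff_of_le hlow).mp hsum y (by simpa using hy)).symm

end Conjugators

theorem mem_of_conj_mem_of_notMem [Finite G] {H N : Subgroup G} [N.Normal]
    (hcov : ∀ x : G, x ∈ N ∨ ∃ g : G, g * x * g⁻¹ ∈ H) {x g : G} (hxN : x ∉ N) (hxH : x ∈ H)
    (hg : g * x * g⁻¹ ∈ H) : g ∈ H := by
  classical
  cases nonempty_fintype G
  by_contra hgH
  have htwo := two_mul_card_le_card_conjugatorsInto (y := x) (b := 1) (mem_conjugatorsInto.mpr hg)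
    (mem_conjugatorsInto.mpr (by simpa using hxH)) (by simpa using hgH)
  rw [card_conjugatorsInto_eq_card H N hcov hxN] at htwo
  have := Nat.card_pos (α := H)
  omega

end Subgroup

/-- If `G = K ∪ ⋃_{g∈G} H^g` with `H`, `K` proper subgroups of the finite group `G`,
then `(G, H, H ∩ K_G)` is a Frobenius–Wielandt group, where `K_G` is the normal core of `K`;
in particular `H` is self-normalizing and `H ∩ H^g ≤ H ∩ K_G` for every `g ∈ G − H`. -/
theorem stmt_5 {G : Type*} [Group G] [Finite G] (H K : Subgroup G)
    (hH : H ≠ ⊤) (hK : K ≠ ⊤)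
    (hcov : ∀ x : G, x ∈ K ∨ ∃ g : G, g * x * g⁻¹ ∈ H) :
    H ≠ ⊥ ∧ H ≠ ⊤ ∧ H ⊓ K.normalCore < H ∧
      (∀ h ∈ H, ∀ x ∈ H ⊓ K.normalCore, h * x * h⁻¹ ∈ H ⊓ K.normalCore) ∧
      Subgroup.normalizer (H : Set G) = H ∧
      (∀ g : G, g ∉ H → ∀ x ∈ H, g * x * g⁻¹ ∈ H → x ∈ H ⊓ K.normalCore) := by
  have hcovN := Subgroup.mem_normalCore_or_exists_conj_mem hcov
  have hHN : ¬ H ≤ K.normalCore := fun hle => hK <| eq_top_iff.mpr fun x _ =>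
    K.normalCore_le <| (hcovN x).elim id fun ⟨_, hg⟩ => K.normalCore_normal.conj_mem_iff.mp (hle hg)
  obtain ⟨x₀, hx₀H, hx₀N⟩ := SetLike.not_le_iff_exists.mp hHN
  refine ⟨fun hbot => hHN (hbot ▸ bot_le), hH, inf_lt_left.mpr hHN, ?_, ?_, ?_⟩
  · intro h hh x hx
    exact ⟨H.mul_mem (H.mul_mem hh hx.1) (H.inv_mem hh), K.normalCore_normal.conj_mem x hx.2 h⟩
  · refine le_antisymm (fun g hg => ?_) H.le_normalizer
    exact Subgroup.mem_of_conj_mem_of_notMem hcovN hx₀N hx₀H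
      ((Subgroup.mem_normalizer_iff.mp hg x₀).mp hx₀H)
  · intro g hg x hxH hgx
    exact ⟨hxH, by_contra fun hxN => hg (Subgroup.mem_of_conj_mem_of_notMem hcovN hxN hxH hgx)⟩
end

section
/- The groups S₃, A₄ and S₄ are (∗)-coverable: for each G ∈ {S₃, A₄, S₄} there exist proper subgroups H, K of G such that G = K ∪ ⋃_{g∈G} H^g. -/
/-!
If every element outside a proper subgroup `K` of a finite group `G` is a `p`-element and `G` is
not a `p`-group, then `K` and a Sylow `p`-subgroup `P` cover `G` in the sense of (∗): a
`p`-element generates a `p`-subgroup, which lies in some Sylow `p`-subgroup, and all of these are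
conjugate to `P`. In `S₃` and `S₄` the odd permutations are `2`-elements (take `K = Aₙ`); in `A₄`
every element outside the Klein four-group `V₄` has order `3` (take `K = V₄`, `p = 3`), since `V₄`
is the unique Sylow `2`-subgroup of `A₄`.
-/

open Equiv Subgroup

/-- `x ∈ H^g = g⁻¹Hg` is written as `g * x * g⁻¹ ∈ H`. -/
def IsStarCoverable (G : Type*) [Group G] : Prop :=
  ∃ H K : Subgroup G, H ≠ ⊤ ∧ K ≠ ⊤ ∧ ∀ x : G, x ∈ K ∨ ∃ g : G, g * x * g⁻¹ ∈ H

section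

variable {G : Type*} [Group G] {p : ℕ}

theorem not_isPGroup_of_prime_dvd_card [hp : Fact p.Prime] [Finite G] {q : ℕ} (hq : q.Prime)
    (hqp : q ≠ p) (hdvd : q ∣ Nat.card G) : ¬IsPGroup p G := fun hG => by
  obtain ⟨n, hn⟩ := IsPGroup.iff_card.mp hG
  exact hqp (Nat.prime_eq_prime_of_dvd_pow hq hp.out (hn ▸ hdvd))

theorem isPGroup_zpowers_of_pow_eq_one {x : G} {n : ℕ} (hx : x ^ p ^ n = 1) :
    IsPGroup p (zpowers x) :=
  IsPGroup.of_card_dvd_pow ((Nat.card_zpowers x).symm ▸ orderOf_dvd_of_pow_eq_one hx)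

theorem Sylow.ne_top_of_not_isPGroup (P : Sylow p G) (hG : ¬IsPGroup p G) :
    (P : Subgroup G) ≠ ⊤ := fun hP => hG fun g => by
  obtain ⟨k, hk⟩ := P.isPGroup' ⟨g, hP ▸ mem_top g⟩
  exact ⟨k, by simpa using congrArg Subtype.val hk⟩

theorem Sylow.exists_conj_mem [Fact p.Prime] [Finite G] (P : Sylow p G) {x : G} {n : ℕ}
    (hx : x ^ p ^ n = 1) : ∃ g : G, g * x * g⁻¹ ∈ P := by
  obtain ⟨Q, hxQ⟩ := (isPGroup_zpowers_of_pow_eq_one hx).exists_le_sylow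
  obtain ⟨g, rfl⟩ := MulAction.exists_smul_eq G Q P
  refine ⟨g, ?_⟩
  rw [← SetLike.mem_coe, Sylow.coe_smul]
  exact Set.smul_mem_smul_set (a := MulAut.conj g) (hxQ (mem_zpowers x))

theorem isStarCoverable_of_pow_eq_one_of_not_mem [Fact p.Prime] [Finite G] (hG : ¬IsPGroup p G)
    (K : Subgroup G) (hK : K ≠ ⊤) (hpow : ∀ x ∉ K, ∃ n, x ^ p ^ n = 1) : IsStarCoverable G := by
  obtain ⟨P⟩ : Nonempty (Sylow p G) := inferInstance
  refine ⟨P, K, P.ne_top_of_not_isPGroup hG, hK, fun x => or_iff_not_imp_left.mpr fun hx => ?_⟩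
  obtain ⟨n, hn⟩ := hpow x hx
  exact P.exists_conj_mem hn

end

theorem alternatingGroup_ne_top (α : Type*) [Fintype α] [DecidableEq α] [Nontrivial α] :
    alternatingGroup α ≠ ⊤ := fun h =>
  absurd (index_eq_one.mpr h) (by rw [alternatingGroup.index_eq_two]; decide)

theorem alternatingGroup.mem_kleinFour_of_pow_eq_one {α : Type*} [Fintype α] [DecidableEq α]
    (hα4 : Nat.card α = 4) {x : alternatingGroup α} {n : ℕ} (hx : x ^ 2 ^ n = 1) :
    x ∈ kleinFour α := by
  have : Fact (Nat.Prime 2) := ⟨Nat.prime_two⟩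
  obtain ⟨Q, hxQ⟩ := (isPGroup_zpowers_of_pow_eq_one hx).exists_le_sylow
  rw [← two_sylow_eq_kleinFour_of_card_eq_four hα4 Q]
  exact hxQ (mem_zpowers x)

theorem alternatingGroup.kleinFour_ne_top {α : Type*} [Fintype α] [DecidableEq α]
    (hα4 : Nat.card α = 4) : kleinFour α ≠ ⊤ := fun h => by
  have := kleinFour_card_of_card_eq_four hα4
  rw [h, card_top, card_of_card_eq_four hα4] at this
  exact absurd this (by decide)

theorem isStarCoverable_perm_of_pow_eq_one_of_not_mem_alternatingGroup {α : Type*} [Fintype α]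
    [DecidableEq α] (hα : 3 ≤ Nat.card α) {n : ℕ}
    (hodd : ∀ x : Perm α, x ∉ alternatingGroup α → x ^ 2 ^ n = 1) : IsStarCoverable (Perm α) := by
  have : Fact (Nat.Prime 2) := ⟨Nat.prime_two⟩
  have : Nontrivial α := Finite.one_lt_card_iff_nontrivial.mp (by omega)
  refine isStarCoverable_of_pow_eq_one_of_not_mem
    (not_isPGroup_of_prime_dvd_card Nat.prime_three (by decide) ?_) (alternatingGroup α)
    (alternatingGroup_ne_top α) fun x hx => ⟨n, hodd x hx⟩
  rw [Nat.card_perm]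
  exact Nat.dvd_factorial (by decide) hα

theorem pow_two_eq_one_of_not_mem_alternatingGroup_fin_three (x : Perm (Fin 3))
    (hx : x ∉ alternatingGroup (Fin 3)) : x ^ 2 ^ 1 = 1 := by
  revert x; simp only [Perm.mem_alternatingGroup]; decide

set_option maxRecDepth 10000 in
theorem pow_four_eq_one_of_not_mem_alternatingGroup_fin_four (x : Perm (Fin 4))
    (hx : x ∉ alternatingGroup (Fin 4)) : x ^ 2 ^ 2 = 1 := by
  revert x; simp only [Perm.mem_alternatingGroup]; decide

theorem isStarCoverable_alternatingGroup_fin_four : IsStarCoverable (alternatingGroup (Fin 4)) := by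
  have : Fact (Nat.Prime 3) := ⟨Nat.prime_three⟩
  have hα4 : Nat.card (Fin 4) = 4 := Nat.card_fin 4
  have horder : ∀ x : alternatingGroup (Fin 4), x ^ 2 ^ 1 = 1 ∨ x ^ 3 ^ 1 = 1 := by decide
  refine isStarCoverable_of_pow_eq_one_of_not_mem (p := 3)
    (not_isPGroup_of_prime_dvd_card Nat.prime_two (by decide) ?_)
    (alternatingGroup.kleinFour (Fin 4)) (alternatingGroup.kleinFour_ne_top hα4) fun x hx => ⟨1, ?_⟩
  · rw [alternatingGroup.card_of_card_eq_four hα4]; decide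
  · exact (horder x).resolve_left fun h => hx (alternatingGroup.mem_kleinFour_of_pow_eq_one hα4 h)

/-- `S₃`, `A₄` and `S₄` are (∗)-coverable: each admits proper subgroups `H`, `K`
with `G = K ∪ ⋃_{g∈G} H^g`. -/
theorem stmt_7 :
    (∃ H K : Subgroup (Equiv.Perm (Fin 3)), H ≠ ⊤ ∧ K ≠ ⊤ ∧
        ∀ x : Equiv.Perm (Fin 3), x ∈ K ∨ ∃ g : Equiv.Perm (Fin 3), g * x * g⁻¹ ∈ H) ∧
    (∃ H K : Subgroup (alternatingGroup (Fin 4)), H ≠ ⊤ ∧ K ≠ ⊤ ∧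
        ∀ x : alternatingGroup (Fin 4), x ∈ K ∨ ∃ g : alternatingGroup (Fin 4), g * x * g⁻¹ ∈ H) ∧
    (∃ H K : Subgroup (Equiv.Perm (Fin 4)), H ≠ ⊤ ∧ K ≠ ⊤ ∧
        ∀ x : Equiv.Perm (Fin 4), x ∈ K ∨ ∃ g : Equiv.Perm (Fin 4), g * x * g⁻¹ ∈ H) :=
  ⟨isStarCoverable_perm_of_pow_eq_one_of_not_mem_alternatingGroup (by simp)
      pow_two_eq_one_of_not_mem_alternatingGroup_fin_three,
    isStarCoverable_alternatingGroup_fin_four,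
    isStarCoverable_perm_of_pow_eq_one_of_not_mem_alternatingGroup (by simp)
      pow_four_eq_one_of_not_mem_alternatingGroup_fin_four⟩
end

section
/- Let G be a finite group with proper subgroups H, K such that G = (⋃_{g∈G} H^g) ∪ (⋃_{g∈G} K^g). If N is a normal subgroup of G with G = NH = NK, then N = (⋃_{x∈N} (H ∩ N)^x) ∪ (⋃_{x∈N} (K ∩ N)^x); in particular, since H ∩ N and K ∩ N are proper subgroups of N, the set {(H ∩ N)^x, (K ∩ N)^x : x ∈ N} is a covering of N. -/
/-!
Write `g⁻¹ = n * h` with `n ∈ N`, `h ∈ H`. If `g * x * g⁻¹ ∈ H` then conjugating back by `h`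
gives `n⁻¹ * x * n ∈ H`, so an `N`-conjugate of `x ∈ N` lies in `H ∩ N`. Properness holds since
`N ≤ H` together with `G = NH` would force `H = G`.
-/

namespace Subgroup

variable {G : Type*} [Group G] {H N : Subgroup G}

theorem eq_top_of_le_of_forall_eq_mul (hNH : ∀ x : G, ∃ n ∈ N, ∃ h ∈ H, x = n * h)
    (hle : N ≤ H) : H = ⊤ := by
  rw [eq_top_iff']
  intro x
  obtain ⟨n, hn, h, hh, rfl⟩ := hNH x
  exact H.mul_mem (hle hn) hh

theorem inf_lt_of_forall_eq_mul (hH : H ≠ ⊤) (hNH : ∀ x : G, ∃ n ∈ N, ∃ h ∈ H, x = n * h) :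
    H ⊓ N < N :=
  inf_lt_right.mpr fun hle => hH (eq_top_of_le_of_forall_eq_mul hNH hle)

theorem inv_mul_mul_mem_of_inv_eq_mul {x g n h : G} (hh : h ∈ H) (hg : g⁻¹ = n * h)
    (hx : g * x * g⁻¹ ∈ H) : n⁻¹ * x * n ∈ H := by
  have hconj : n⁻¹ * x * n = h * (g * x * g⁻¹) * h⁻¹ := by
    rw [hg, show g = h⁻¹ * n⁻¹ by rw [← inv_inv g, hg, mul_inv_rev]]
    group
  rw [hconj]
  exact H.mul_mem (H.mul_mem hh hx) (H.inv_mem hh)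

theorem exists_conj_mem_inf_of_forall_eq_mul [N.Normal]
    (hNH : ∀ x : G, ∃ n ∈ N, ∃ h ∈ H, x = n * h) {x g : G} (hx : x ∈ N)
    (hg : g * x * g⁻¹ ∈ H) : ∃ y ∈ N, y * x * y⁻¹ ∈ H ⊓ N := by
  obtain ⟨n, hn, h, hh, hgn⟩ := hNH g⁻¹
  refine ⟨n⁻¹, N.inv_mem hn, ?_, Normal.conj_mem inferInstance x hx n⁻¹⟩
  rw [inv_inv]
  exact inv_mul_mul_mem_of_inv_eq_mul hh hgn hg

end Subgroup

theorem stmt_11_general {G : Type*} [Group G] (H K N : Subgroup G)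
    (hH : H ≠ ⊤) (hK : K ≠ ⊤)
    (hcov : ∀ x : G, (∃ g : G, g * x * g⁻¹ ∈ H) ∨ (∃ g : G, g * x * g⁻¹ ∈ K))
    [N.Normal]
    (hNH : ∀ x : G, ∃ n ∈ N, ∃ h ∈ H, x = n * h)
    (hNK : ∀ x : G, ∃ n ∈ N, ∃ k ∈ K, x = n * k) :
    H ⊓ N < N ∧ K ⊓ N < N ∧
      ∀ x ∈ N, (∃ y ∈ N, y * x * y⁻¹ ∈ H ⊓ N) ∨ (∃ y ∈ N, y * x * y⁻¹ ∈ K ⊓ N) := by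
  refine ⟨Subgroup.inf_lt_of_forall_eq_mul hH hNH, Subgroup.inf_lt_of_forall_eq_mul hK hNK,
    fun x hx => ?_⟩
  rcases hcov x with ⟨g, hg⟩ | ⟨g, hg⟩
  · exact Or.inl (Subgroup.exists_conj_mem_inf_of_forall_eq_mul hNH hx hg)
  · exact Or.inr (Subgroup.exists_conj_mem_inf_of_forall_eq_mul hNK hx hg)

/-- If `{H^g, K^g : g ∈ G}` covers the finite group `G` and `N ⊴ G` satisfies
`G = NH = NK`, then `{(H ∩ N)^x, (K ∩ N)^x : x ∈ N}` is a covering of `N`: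
`H ∩ N` and `K ∩ N` are proper in `N` and their `N`-conjugates cover `N`. -/
theorem stmt_11 {G : Type*} [Group G] [Finite G] (H K N : Subgroup G)
    (hH : H ≠ ⊤) (hK : K ≠ ⊤)
    (hcov : ∀ x : G, (∃ g : G, g * x * g⁻¹ ∈ H) ∨ (∃ g : G, g * x * g⁻¹ ∈ K))
    [N.Normal]
    (hNH : ∀ x : G, ∃ n ∈ N, ∃ h ∈ H, x = n * h)
    (hNK : ∀ x : G, ∃ n ∈ N, ∃ k ∈ K, x = n * k) :
    H ⊓ N < N ∧ K ⊓ N < N ∧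
      ∀ x ∈ N, (∃ y ∈ N, y * x * y⁻¹ ∈ H ⊓ N) ∨ (∃ y ∈ N, y * x * y⁻¹ ∈ K ⊓ N) :=
  stmt_11_general H K N hH hK hcov hNH hNK
end

section
/- S₅ and S₆ are (∗∗)-coverable groups: for each G ∈ {S₅, S₆} there exist proper subgroups H, K of G such that G = (⋃_{g∈G} H^g) ∪ (⋃_{g∈G} K^g). -/
/-!
Two permutations are conjugate exactly when they have the same cycle type, so a pair of subgroups
covers `Sₙ` by conjugates as soon as every cycle type occurs in one of them. For `S₅` take the
Frobenius group `F₂₀`, the normalizer of `⟨(0 1 2 3 4)⟩`, which contains the 5-cycle, the 4-cycle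
`(1 2 4 3)` and its square `(1 4)(2 3)`, together with the cyclic group of order 6 centralizing
`(0 1 2)(3 4)`, which contains elements of cycle types `1`, `2`, `3` and `3 + 2`. For `S₆` every
permutation with a fixed point is conjugate into the point stabilizer `S₅`, and the four
fixed-point-free cycle types `6`, `4 + 2`, `3 + 3`, `2 + 2 + 2` all occur in the centralizer
`C₂ ≀ S₃` of the involution `(0 3)(1 4)(2 5)`.
-/

open Equiv Subgroup

namespace Subgroup

variable {G : Type*} [Group G]

theorem mem_normalizer_zpowers_of_conj_eq_zpow [Finite G] {g c : G} {k : ℤ}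
    (h : g * c * g⁻¹ = c ^ k) : g ∈ normalizer (zpowers c : Set G) := by
  refine mem_normalizer_fintype fun n hn => ?_
  obtain ⟨j, rfl⟩ := mem_zpowers_iff.mp hn
  rw [← conj_zpow, h, ← zpow_mul]
  exact zpow_mem (mem_zpowers c) _

theorem normalizer_zpowers_ne_top {g c : G} (h : g * c * g⁻¹ * c ≠ c * (g * c * g⁻¹)) :
    normalizer (zpowers c : Set G) ≠ ⊤ := by
  rw [Ne, normalizer_eq_top_iff]
  intro hN
  obtain ⟨k, hk⟩ := mem_zpowers_iff.mp (hN.conj_mem c (mem_zpowers c) g)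
  exact h (hk ▸ ((Commute.refl c).zpow_left k).eq)

theorem centralizer_singleton_ne_top {g σ : G} (h : g * σ ≠ σ * g) : centralizer {σ} ≠ ⊤ :=
  fun hC => h (mem_centralizer_singleton_iff.mp (hC ▸ mem_top g))

end Subgroup

theorem Multiset.mem_of_forall_two_le_of_sum_le_six {m : Multiset ℕ} (h2 : ∀ a ∈ m, 2 ≤ a)
    (hsum : m.sum ≤ 6) :
    m ∈ ({0, {2}, {3}, {4}, {5}, {6}, {2, 2}, {3, 2}, {4, 2}, {3, 3}, {2, 2, 2}} :
      Finset (Multiset ℕ)) := by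
  have hcard : Multiset.card m ≤ 3 := by
    have := Multiset.card_nsmul_le_sum h2
    simp only [smul_eq_mul] at this
    omega
  interval_cases hm : Multiset.card m
  · simp [Multiset.card_eq_zero.mp hm]
  · obtain ⟨a, rfl⟩ := Multiset.card_eq_one.mp hm
    simp only [Multiset.mem_singleton, forall_eq, Multiset.sum_singleton] at h2 hsum
    interval_cases a <;> decide
  · obtain ⟨a, b, rfl⟩ := Multiset.card_eq_two.mp hm
    simp only [Multiset.insert_eq_cons, Multiset.mem_cons, Multiset.mem_singleton,
      forall_eq_or_imp, forall_eq, Multiset.sum_cons, Multiset.sum_singleton] at h2 hsum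
    obtain ⟨ha, hb⟩ := h2
    have : a ≤ 4 := by omega
    have : b ≤ 4 := by omega
    interval_cases a <;> interval_cases b <;> revert hsum <;> decide
  · obtain ⟨a, b, c, rfl⟩ := Multiset.card_eq_three.mp hm
    simp only [Multiset.insert_eq_cons, Multiset.mem_cons, Multiset.mem_singleton,
      forall_eq_or_imp, forall_eq, Multiset.sum_cons, Multiset.sum_singleton] at h2 hsum
    obtain ⟨rfl, rfl, rfl⟩ : a = 2 ∧ b = 2 ∧ c = 2 := by omega
    decide

namespace Equiv.Perm

variable {α : Type*} [DecidableEq α]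

theorem exists_conj_mem_iff_exists_cycleType_eq [Fintype α] {H : Subgroup (Perm α)} {x : Perm α} :
    (∃ g, g * x * g⁻¹ ∈ H) ↔ ∃ r ∈ H, r.cycleType = x.cycleType := by
  constructor
  · rintro ⟨g, hg⟩
    exact ⟨_, hg, (isConj_iff_cycleType_eq.mp (isConj_iff.mpr ⟨g, rfl⟩)).symm⟩
  · rintro ⟨r, hr, hxr⟩
    obtain ⟨g, rfl⟩ := isConj_iff.mp (isConj_iff_cycleType_eq.mpr hxr.symm)
    exact ⟨g, hr⟩

theorem swap_mul_mul_swap_mem_stabilizer {x : Perm α} {a : α} (b : α) (hx : x a = a) :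
    swap a b * x * (swap a b)⁻¹ ∈ MulAction.stabilizer (Perm α) b := by
  simp [MulAction.mem_stabilizer_iff, Perm.smul_def, hx]

theorem stabilizer_ne_top {a b : α} (hab : a ≠ b) : MulAction.stabilizer (Perm α) a ≠ ⊤ := by
  intro h
  have : swap a b ∈ MulAction.stabilizer (Perm α) a := h ▸ mem_top _
  simp [MulAction.mem_stabilizer_iff, Perm.smul_def, hab.symm] at this

theorem cycleType_mem_of_fin_five (x : Perm (Fin 5)) :
    x.cycleType ∈ ({0, {2}, {3}, {4}, {5}, {2, 2}, {3, 2}} : Finset (Multiset ℕ)) := by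
  have hsum : x.cycleType.sum ≤ 5 := sum_cycleType x ▸ x.support.card_le_univ
  have hmem := Multiset.mem_of_forall_two_le_of_sum_le_six (fun _ => two_le_of_mem_cycleType)
    (hsum.trans (by norm_num))
  generalize x.cycleType = m at hsum hmem
  revert hsum
  revert m
  decide

theorem cycleType_mem_of_fin_six (x : Perm (Fin 6)) (hx : ∀ a, x a ≠ a) :
    x.cycleType ∈ ({{6}, {4, 2}, {3, 3}, {2, 2, 2}} : Finset (Multiset ℕ)) := by
  have hsupp : x.support = Finset.univ := Finset.eq_univ_of_forall fun a => mem_support.mpr (hx a)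
  have hsum : x.cycleType.sum = 6 := by rw [sum_cycleType, hsupp, Finset.card_fin]
  have hmem := Multiset.mem_of_forall_two_le_of_sum_le_six (fun _ => two_le_of_mem_cycleType)
    hsum.le
  generalize x.cycleType = m at hsum hmem
  revert hsum
  revert m
  decide

theorem exists_conj_mem_normalizer_or_centralizer_of_fin_five (x : Perm (Fin 5)) :
    (∃ g, g * x * g⁻¹ ∈ normalizer (zpowers (finRotate 5) : Set (Perm (Fin 5)))) ∨
      ∃ g, g * x * g⁻¹ ∈ centralizer {c[0, 1, 2] * c[3, 4]} := by
  -- `(1 2 4 3)` is `x ↦ 2x` on `ZMod 5`, which conjugates `x ↦ x + 1` to `x ↦ x + 2`.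
  have hs : c[1, 2, 4, 3] ∈ normalizer (zpowers (finRotate 5) : Set (Perm (Fin 5))) :=
    mem_normalizer_zpowers_of_conj_eq_zpow (k := 2) (by decide)
  rw [exists_conj_mem_iff_exists_cycleType_eq, exists_conj_mem_iff_exists_cycleType_eq]
  have hx := cycleType_mem_of_fin_five x
  simp only [Finset.mem_insert, Finset.mem_singleton] at hx
  rcases hx with h | h | h | h | h | h | h <;> rw [h]
  · exact .inr ⟨1, one_mem _, by decide⟩
  · exact .inr ⟨c[3, 4], mem_centralizer_singleton_iff.mpr (by decide), by decide⟩
  · exact .inr ⟨c[0, 1, 2], mem_centralizer_singleton_iff.mpr (by decide), by decide⟩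
  · exact .inl ⟨c[1, 2, 4, 3], hs, by decide⟩
  · exact .inl ⟨finRotate 5, le_normalizer (mem_zpowers _), by decide⟩
  · exact .inl ⟨c[1, 2, 4, 3] ^ 2, pow_mem hs 2, by decide⟩
  · exact .inr ⟨c[0, 1, 2] * c[3, 4], mem_centralizer_singleton_iff.mpr rfl, by decide⟩

theorem exists_conj_mem_stabilizer_or_centralizer_of_fin_six (x : Perm (Fin 6)) :
    (∃ g, g * x * g⁻¹ ∈ MulAction.stabilizer (Perm (Fin 6)) (0 : Fin 6)) ∨
      ∃ g, g * x * g⁻¹ ∈ centralizer {c[0, 3] * c[1, 4] * c[2, 5]} := by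
  by_cases hfix : ∃ a, x a = a
  · obtain ⟨a, ha⟩ := hfix
    exact .inl ⟨_, swap_mul_mul_swap_mem_stabilizer 0 ha⟩
  push Not at hfix
  right
  rw [exists_conj_mem_iff_exists_cycleType_eq]
  have hx := cycleType_mem_of_fin_six x hfix
  simp only [Finset.mem_insert, Finset.mem_singleton] at hx
  rcases hx with h | h | h | h <;> rw [h]
  · exact ⟨finRotate 6, mem_centralizer_singleton_iff.mpr (by decide), by decide⟩
  · exact ⟨c[0, 1, 3, 4] * c[2, 5], mem_centralizer_singleton_iff.mpr (by decide), by decide⟩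
  · exact ⟨c[0, 1, 2] * c[3, 4, 5], mem_centralizer_singleton_iff.mpr (by decide), by decide⟩
  · exact ⟨c[0, 3] * c[1, 4] * c[2, 5], mem_centralizer_singleton_iff.mpr rfl, by decide⟩

end Equiv.Perm

/-- `S₅` and `S₆` are (∗∗)-coverable: each admits proper subgroups `H`, `K` such that
`G = (⋃_{g∈G} H^g) ∪ (⋃_{g∈G} K^g)`. -/
theorem stmt_12 :
    (∃ H K : Subgroup (Equiv.Perm (Fin 5)), H ≠ ⊤ ∧ K ≠ ⊤ ∧
        ∀ x : Equiv.Perm (Fin 5),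
          (∃ g : Equiv.Perm (Fin 5), g * x * g⁻¹ ∈ H) ∨
            (∃ g : Equiv.Perm (Fin 5), g * x * g⁻¹ ∈ K)) ∧
    (∃ H K : Subgroup (Equiv.Perm (Fin 6)), H ≠ ⊤ ∧ K ≠ ⊤ ∧
        ∀ x : Equiv.Perm (Fin 6),
          (∃ g : Equiv.Perm (Fin 6), g * x * g⁻¹ ∈ H) ∨
            (∃ g : Equiv.Perm (Fin 6), g * x * g⁻¹ ∈ K)) :=
  ⟨⟨_, _, normalizer_zpowers_ne_top (g := swap 0 1) (c := finRotate 5) (by decide),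
      centralizer_singleton_ne_top (g := swap 0 1) (σ := c[0, 1, 2] * c[3, 4]) (by decide),
      Perm.exists_conj_mem_normalizer_or_centralizer_of_fin_five⟩,
    ⟨_, _, Perm.stabilizer_ne_top (a := (0 : Fin 6)) (b := 1) (by decide),
      centralizer_singleton_ne_top (g := swap 0 1) (σ := c[0, 3] * c[1, 4] * c[2, 5]) (by decide),
      Perm.exists_conj_mem_stabilizer_or_centralizer_of_fin_six⟩⟩
end

section
/- Let n ≥ 5 and let H, K be proper subgroups of Aₙ such that Aₙ = (⋃_{g∈Aₙ} H^g) ∪ (⋃_{g∈Aₙ} K^g). Then at least one of H and K acts transitively on {1, …, n}. -/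
/-!
If `H` is intransitive, the `H`-orbit of a point is a set of some size `a` with `0 < a < n`
preserved by `H`, so every permutation conjugate into `H` preserves a set of size `a`; likewise
`b` for `K`. A permutation with two cycles of lengths `k + m = n` preserves only sets of sizes
`0, k, m, n`, and it is even when `k + m - 2` is even. For odd `n` take an `n`-cycle; for even
`n ≥ 6` some `k ∈ [1, n - 1]` avoids the four values `a, n - a, b, n - b`. Such a permutation
then lies in no conjugate of `H` or `K`.
-/

open Equiv Equiv.Perm Finset

namespace Equiv.Perm

variable {α β : Type*}

def StabilizesFinsetOfCard (σ : Perm α) (a : ℕ) : Prop :=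
  ∃ t : Finset α, #t = a ∧ ∀ x ∈ t, σ x ∈ t

lemma StabilizesFinsetOfCard.of_permCongr (e : α ≃ β) {σ : Perm α} {a : ℕ}
    (h : (e.permCongr σ).StabilizesFinsetOfCard a) : σ.StabilizesFinsetOfCard a := by
  obtain ⟨t, rfl, ht⟩ := h
  refine ⟨t.map e.symm.toEmbedding, card_map _, fun x hx => ?_⟩
  rw [mem_map_equiv, symm_symm] at hx ⊢
  simpa using ht _ hx

lemma StabilizesFinsetOfCard.of_conj {g σ : Perm α} {a : ℕ}
    (h : (g * σ * g⁻¹).StabilizesFinsetOfCard a) : σ.StabilizesFinsetOfCard a :=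
  .of_permCongr g (by rwa [permCongr_eq_mul])

lemma SameCycle.mem_of_forall_mem [Finite α] {σ : Perm α} {s : Finset α}
    (hs : ∀ x ∈ s, σ x ∈ s) {x y : α} (hxy : σ.SameCycle x y) (hx : x ∈ s) : y ∈ s := by
  obtain ⟨i, rfl⟩ := hxy.exists_nat_pow_eq
  clear hxy
  induction i with
  | zero => simpa
  | succ i ih => rw [pow_succ', mul_apply]; exact hs _ ih

lemma sameCycle_finRotate {k : ℕ} (x y : Fin k) : (finRotate k).SameCycle x y := by
  rcases lt_or_ge k 2 with hk | hk
  · obtain rfl : x = y := Fin.subsingleton_iff_le_one.mpr (by omega) |>.elim x y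
    exact SameCycle.refl _ _
  · have hsupp := support_finRotate_of_le hk
    exact (isCycle_finRotate_of_le hk).sameCycle (mem_support.mp (hsupp ▸ mem_univ x))
      (mem_support.mp (hsupp ▸ mem_univ y))

lemma eq_empty_or_eq_univ_of_forall_finRotate_mem {k : ℕ} {s : Finset (Fin k)}
    (hs : ∀ x ∈ s, finRotate k x ∈ s) : s = ∅ ∨ s = univ := by
  rcases s.eq_empty_or_nonempty with h | ⟨x, hx⟩
  · exact .inl h
  · exact .inr (eq_univ_of_forall fun y => (sameCycle_finRotate x y).mem_of_forall_mem hs hx)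

lemma StabilizesFinsetOfCard.sumCongr_finRotate {k m a : ℕ}
    (h : (sumCongr (finRotate k) (finRotate m)).StabilizesFinsetOfCard a) :
    a = 0 ∨ a = k ∨ a = m ∨ a = k + m := by
  obtain ⟨t, rfl, ht⟩ := h
  have hl : #t.toLeft = 0 ∨ #t.toLeft = k := by
    rcases eq_empty_or_eq_univ_of_forall_finRotate_mem (s := t.toLeft)
      (fun x hx => by simpa using ht _ (mem_toLeft.mp hx)) with h | h <;> simp [h]
  have hr : #t.toRight = 0 ∨ #t.toRight = m := by
    rcases eq_empty_or_eq_univ_of_forall_finRotate_mem (s := t.toRight)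
      (fun x hx => by simpa using ht _ (mem_toRight.mp hx)) with h | h <;> simp [h]
  rw [← card_toLeft_add_card_toRight]
  omega

lemma sign_permCongr_sumCongr_finRotate [DecidableEq α] [Fintype α] {k m : ℕ}
    (e : Fin k ⊕ Fin m ≃ α) :
    sign (e.permCongr (sumCongr (finRotate k) (finRotate m))) = (-1) ^ (k - 1 + (m - 1)) := by
  rw [sign_permCongr, sign_sumCongr, sign_finRotate, sign_finRotate, pow_add]

lemma exists_stabilizesFinsetOfCard_of_not_transitive [Fintype α] {G : Type*} [Group G]
    (φ : G →* Perm α) {H : Subgroup G} (hH : ¬ ∀ i j, ∃ σ ∈ H, φ σ i = j) :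
    ∃ a, 0 < a ∧ a < Fintype.card α ∧ ∀ σ ∈ H, (φ σ).StabilizesFinsetOfCard a := by
  classical
  push Not at hH
  obtain ⟨i, j, hij⟩ := hH
  set orbit : Finset α := {p | ∃ σ ∈ H, φ σ i = p}
  have hi : i ∈ orbit := by simpa [orbit] using ⟨1, H.one_mem, by simp⟩
  have hj : j ∉ orbit := by simpa [orbit] using hij
  refine ⟨#orbit, card_pos.mpr ⟨i, hi⟩, card_lt_univ_of_notMem hj, fun σ hσ => ⟨orbit, rfl, ?_⟩⟩
  simp only [orbit, mem_filter, mem_univ, true_and]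
  rintro _ ⟨τ, hτ, rfl⟩
  exact ⟨σ * τ, H.mul_mem hσ hτ, by simp⟩

end Equiv.Perm

lemma exists_split_avoiding {n a b : ℕ} (hn : 5 ≤ n) (ha : 0 < a) (ha' : a < n)
    (hb : 0 < b) (hb' : b < n) :
    ∃ k m, k + m = n ∧ Even (k - 1 + (m - 1)) ∧ k ≠ a ∧ m ≠ a ∧ k ≠ b ∧ m ≠ b := by
  rcases Nat.even_or_odd n with ⟨c, hc⟩ | ⟨c, hc⟩
  · have hcard : #({a, n - a, b, n - b} : Finset ℕ) < #(Icc 1 (n - 1)) := by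
      grw [card_le_four, Nat.card_Icc]
      omega
    obtain ⟨k, hk, hk'⟩ := exists_mem_notMem_of_card_lt_card hcard
    simp only [mem_Icc, mem_insert, mem_singleton, not_or] at hk hk'
    exact ⟨k, n - k, by omega, ⟨c - 1, by omega⟩, by omega⟩
  · exact ⟨n, 0, rfl, ⟨c, by omega⟩, by omega⟩

theorem stmt_15_general (n : ℕ) (hn : 5 ≤ n)
    (H K : Subgroup (alternatingGroup (Fin n)))
    (hcov : ∀ x : alternatingGroup (Fin n),
      (∃ g : alternatingGroup (Fin n), g * x * g⁻¹ ∈ H) ∨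
        (∃ g : alternatingGroup (Fin n), g * x * g⁻¹ ∈ K)) :
    (∀ i j : Fin n, ∃ σ ∈ H, (σ : Equiv.Perm (Fin n)) i = j) ∨
      (∀ i j : Fin n, ∃ σ ∈ K, (σ : Equiv.Perm (Fin n)) i = j) := by
  rw [or_iff_not_and_not]
  rintro ⟨hHt, hKt⟩
  set φ := (alternatingGroup (Fin n)).subtype
  obtain ⟨a, ha, ha', hHa⟩ := exists_stabilizesFinsetOfCard_of_not_transitive φ hHt
  obtain ⟨b, hb, hb', hKb⟩ := exists_stabilizesFinsetOfCard_of_not_transitive φ hKt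
  rw [Fintype.card_fin] at ha' hb'
  obtain ⟨k, m, hkm, hpar, hka, hma, hkb, hmb⟩ := exists_split_avoiding hn ha ha' hb hb'
  set π := (finSumFinEquiv.trans (finCongr hkm)).permCongr
    (Perm.sumCongr (finRotate k) (finRotate m))
  have hπ : π ∈ alternatingGroup (Fin n) := by
    rw [mem_alternatingGroup, sign_permCongr_sumCongr_finRotate, hpar.neg_one_pow]
  have hπ_card {c : ℕ} (hc : π.StabilizesFinsetOfCard c) : c = 0 ∨ c = k ∨ c = m ∨ c = n :=
    hkm ▸ (hc.of_permCongr _).sumCongr_finRotate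
  have of_conj_mem {L : Subgroup (alternatingGroup (Fin n))} {c : ℕ}
      (hL : ∀ σ ∈ L, (φ σ).StabilizesFinsetOfCard c) {g : alternatingGroup (Fin n)}
      (hg : g * ⟨π, hπ⟩ * g⁻¹ ∈ L) : π.StabilizesFinsetOfCard c :=
    .of_conj (by simpa [φ] using hL _ hg)
  rcases hcov ⟨π, hπ⟩ with ⟨g, hg⟩ | ⟨g, hg⟩
  · have := hπ_card (of_conj_mem hHa hg)
    omega
  · have := hπ_card (of_conj_mem hKb hg)
    omega

/-- If `n ≥ 5` and `H`, `K` are proper subgroups of `Aₙ` whose conjugates cover `Aₙ`,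
then at least one of `H`, `K` is transitive on `{1,…,n}`. -/
theorem stmt_15 (n : ℕ) (hn : 5 ≤ n)
    (H K : Subgroup (alternatingGroup (Fin n)))
    (hH : H ≠ ⊤) (hK : K ≠ ⊤)
    (hcov : ∀ x : alternatingGroup (Fin n),
      (∃ g : alternatingGroup (Fin n), g * x * g⁻¹ ∈ H) ∨
        (∃ g : alternatingGroup (Fin n), g * x * g⁻¹ ∈ K)) :
    (∀ i j : Fin n, ∃ σ ∈ H, (σ : Equiv.Perm (Fin n)) i = j) ∨
      (∀ i j : Fin n, ∃ σ ∈ K, (σ : Equiv.Perm (Fin n)) i = j) :=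
  stmt_15_general n hn H K hcov
end
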